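/- Let a satisfy hypothesis (A.0), let b ≥ 0 be measurable satisfying hypothesis (B.0), let m > 1 and r ∈ (1, m], and set δ_r := inf_{y>0} { 1 − y^{−r}·∫₀^y x^r b(x,y) dx }. Let ψ ≥ 0 be measurable with ∫₀^∞ (x+x^m)(1+a(x))ψ(x) dx < ∞. Then ∫₀^∞ w_r(x)·F(ψ)(x) dx ≤ −δ_r·∫₁^∞ x^r a(x)ψ(x) dx + ∫₁^∞ x a(x)ψ(x) dx. -/

import Mathlib

open MeasureTheory Set Real
open scoped ENNReal

/-- The fragmentation operator `F(φ)(x) = −a(x)φ(x) + ∫_x^∞ a(y)b(x,y)φ(y) dy`. -/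
noncomputable def fragOp (a : ℝ → ℝ) (b : ℝ → ℝ → ℝ) (φ : ℝ → ℝ) (x : ℝ) : ℝ :=
  -(a x * φ x) + ∫ y in Ioi x, a y * b x y * φ y

/-- The weight `w_r`: `w_r(x) = ((r−1)/2)x³` on `[0,1]` and
`w_r(x) = x^r + ((r−3)/2)x` for `x > 1`. -/
noncomputable def wgt (r x : ℝ) : ℝ :=
  if x ≤ 1 then ((r - 1) / 2) * x ^ 3 else x ^ r + ((r - 3) / 2) * x

private lemma rpow_sub_one_mul {y r : ℝ} (hy : 0 < y) : y ^ (r - 1) * y = y ^ r := by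
  rw [← Real.rpow_add_one hy.ne' (r - 1)]
  norm_num

private lemma wgt_nonneg {r x : ℝ} (hr : 1 < r) (hx : 0 ≤ x) : 0 ≤ wgt r x := by
  unfold wgt
  split_ifs with h
  · have := pow_nonneg hx 3
    nlinarith
  · push_neg at h
    have h0 : (0:ℝ) < x := lt_trans one_pos h
    have h1 : (1:ℝ) ≤ x ^ (r - 1) := by
      calc (1:ℝ) = 1 ^ (r - 1) := (Real.one_rpow _).symm
      _ ≤ x ^ (r - 1) := Real.rpow_le_rpow zero_le_one h.le (by linarith)
    have hxr : x ^ (r - 1) * x = x ^ r := rpow_sub_one_mul h0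
    nlinarith

private lemma wgt_pos {r x : ℝ} (hr : 1 < r) (hx : 0 < x) : 0 < wgt r x := by
  unfold wgt
  split_ifs with h
  · have := pow_pos hx 3
    nlinarith
  · push_neg at h
    have h0 : (0:ℝ) < x := lt_trans one_pos h
    have h1 : (1:ℝ) ≤ x ^ (r - 1) := by
      calc (1:ℝ) = 1 ^ (r - 1) := (Real.one_rpow _).symm
      _ ≤ x ^ (r - 1) := Real.rpow_le_rpow zero_le_one h.le (by linarith)
    have hxr : x ^ (r - 1) * x = x ^ r := rpow_sub_one_mul h0
    nlinarith

private lemma wgt_le {r x : ℝ} (hr : 1 < r) (hx : 0 < x) :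
    wgt r x ≤ x ^ r + ((r - 1) / 2) * x := by
  unfold wgt
  split_ifs with h
  · have h3 : x ^ 3 ≤ x := by
      have haux : 0 ≤ x * (1 - x) * (1 + x) :=
        mul_nonneg (mul_nonneg hx.le (by linarith)) (by linarith)
      nlinarith
    have h0 : 0 ≤ x ^ r := Real.rpow_nonneg hx.le r
    nlinarith
  · push_neg at h
    nlinarith

/-- `wgt r x ≤ (y^(r-1) + (r-1)/2) * x` for `0 < x ≤ y`. -/
private lemma wgt_le_mul {r x y : ℝ} (hr : 1 < r) (hx : 0 < x) (hxy : x ≤ y) :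
    wgt r x ≤ (y ^ (r - 1) + (r - 1) / 2) * x := by
  have h1 : x ^ (r - 1) ≤ y ^ (r - 1) := Real.rpow_le_rpow hx.le hxy (by linarith)
  have hxr : x ^ (r - 1) * x = x ^ r := rpow_sub_one_mul hx
  have := wgt_le hr hx
  nlinarith

private lemma wgt_measurable (r : ℝ) : Measurable (wgt r) := by
  unfold wgt
  exact Measurable.ite (measurableSet_le measurable_id measurable_const)
    (by fun_prop) (by fun_prop)

set_option maxHeartbeats 1000000 in
/-- under (A.0) and (B.0), for `r ∈ (1,m]` and nonnegative `ψ` with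
`∫₀^∞ (x+x^m)(1+a(x))ψ(x) dx < ∞`,
`∫₀^∞ w_r(x) F(ψ)(x) dx ≤ −δ_r ∫₁^∞ x^r a(x)ψ(x) dx + ∫₁^∞ x a(x)ψ(x) dx`. -/
theorem frag_wr_estimate (a : ℝ → ℝ) (b : ℝ → ℝ → ℝ) (m r : ℝ) (ψ : ℝ → ℝ)
    (ha : Measurable a) (ha0 : ∀ x ∈ Ioi (0 : ℝ), 0 ≤ a x)
    (haloc : ∀ R : ℝ, 0 < R → ∃ C : ℝ, ∀ x ∈ Ioc (0 : ℝ) R, a x ≤ C)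
    (hb : Measurable (Function.uncurry b))
    (hbnn : ∀ x y : ℝ, 0 < x → 0 < y → 0 ≤ b x y)
    (hB0int : ∀ y : ℝ, 0 < y → IntegrableOn (fun x => x * b x y) (Ioo 0 y))
    (hB0 : ∀ y : ℝ, 0 < y → (∫ x in Ioo 0 y, x * b x y) = y)
    (hm : 1 < m) (hr1 : 1 < r) (hrm : r ≤ m)
    (hψm : Measurable ψ) (hψ0 : ∀ x ∈ Ioi (0 : ℝ), 0 ≤ ψ x)
    (hψint : IntegrableOn (fun x => (x + x ^ m) * (1 + a x) * ψ x) (Ioi 0)) :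
    (∫ x in Ioi (0 : ℝ), wgt r x * fragOp a b ψ x) ≤
      -(sInf ((fun y => 1 - (∫ x in Ioo 0 y, x ^ r * b x y) / y ^ r) '' Ioi 0)) *
          (∫ x in Ioi (1 : ℝ), x ^ r * (a x * ψ x)) +
        ∫ x in Ioi (1 : ℝ), x * (a x * ψ x) := by
  set δ := sInf ((fun y => 1 - (∫ x in Ioo 0 y, x ^ r * b x y) / y ^ r) '' Ioi 0) with hδdef
  have hwm : Measurable (wgt r) := wgt_measurable r
  -- measurability of sections of b
  have hbx : ∀ y : ℝ, Measurable fun x => b x y := fun y =>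
    hb.comp (measurable_id.prodMk measurable_const)
  have hby : ∀ x : ℝ, Measurable fun y => b x y := fun x =>
    hb.comp (measurable_const.prodMk measurable_id)
  -- integrability of x^r * b on (0,y)
  have hIr : ∀ y : ℝ, 0 < y → IntegrableOn (fun x => x ^ r * b x y) (Ioo 0 y) := by
    intro y hy
    apply Integrable.mono' (((hB0int y hy).const_mul (y ^ (r - 1))))
    · exact (((by fun_prop : Measurable fun x : ℝ => x ^ r).mul (hbx y)).aestronglyMeasurable)
    · filter_upwards [ae_restrict_mem measurableSet_Ioo] with x hx
      have hb0 : 0 ≤ b x y := hbnn x y hx.1 hy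
      have h1 : x ^ (r - 1) ≤ y ^ (r - 1) := Real.rpow_le_rpow hx.1.le hx.2.le (by linarith)
      have hxr : x ^ (r - 1) * x = x ^ r := rpow_sub_one_mul hx.1
      rw [Real.norm_eq_abs, abs_of_nonneg (mul_nonneg (Real.rpow_nonneg hx.1.le r) hb0)]
      nlinarith [mul_nonneg hx.1.le hb0]
  -- ∫ x^r b ≤ y^r
  have hIrle : ∀ y : ℝ, 0 < y → (∫ x in Ioo 0 y, x ^ r * b x y) ≤ y ^ r := by
    intro y hy
    have : (∫ x in Ioo 0 y, x ^ r * b x y) ≤ ∫ x in Ioo 0 y, y ^ (r - 1) * (x * b x y) := by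
      apply setIntegral_mono_on (hIr y hy) ((hB0int y hy).const_mul _) measurableSet_Ioo
      intro x hx
      have hb0 : 0 ≤ b x y := hbnn x y hx.1 hy
      have h1 : x ^ (r - 1) ≤ y ^ (r - 1) := Real.rpow_le_rpow hx.1.le hx.2.le (by linarith)
      have hxr : x ^ (r - 1) * x = x ^ r := rpow_sub_one_mul hx.1
      nlinarith [mul_nonneg hx.1.le hb0]
    rw [integral_const_mul, hB0 y hy, rpow_sub_one_mul hy] at this
    exact this
  -- δ ≤ each element, and δ ≥ 0
  have hδle : ∀ y : ℝ, 0 < y → δ ≤ 1 - (∫ x in Ioo 0 y, x ^ r * b x y) / y ^ r := by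
    intro y hy
    apply csInf_le
    · refine ⟨0, fun t ht => ?_⟩
      rcases ht with ⟨y', hy', rfl⟩
      have hy' : (0:ℝ) < y' := hy'
      have hyr : (0:ℝ) < y' ^ r := Real.rpow_pos_of_pos hy' r
      have := hIrle y' hy'
      have h2 : (∫ x in Ioo 0 y', x ^ r * b x y') / y' ^ r ≤ 1 := by
        rw [div_le_one hyr]; exact this
      simp only
      linarith
    · exact ⟨y, hy, rfl⟩
  have hδr : ∀ y : ℝ, 1 < y → (∫ x in Ioo 0 y, x ^ r * b x y) ≤ (1 - δ) * y ^ r := by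
    intro y hy
    have hy0 : (0:ℝ) < y := lt_trans one_pos hy
    have hyr : (0:ℝ) < y ^ r := Real.rpow_pos_of_pos hy0 r
    have := hδle y hy0
    have h2 : (∫ x in Ioo 0 y, x ^ r * b x y) / y ^ r ≤ 1 - δ := by linarith
    calc (∫ x in Ioo 0 y, x ^ r * b x y)
        = ((∫ x in Ioo 0 y, x ^ r * b x y) / y ^ r) * y ^ r := by field_simp
      _ ≤ (1 - δ) * y ^ r := by nlinarith
  -- integrability of wgt * b on (0,y), and definition of J
  have hJint : ∀ y : ℝ, 0 < y → IntegrableOn (fun x => wgt r x * b x y) (Ioo 0 y) := by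
    intro y hy
    apply Integrable.mono' (((hB0int y hy).const_mul (y ^ (r - 1) + (r - 1) / 2)))
    · exact (hwm.mul (hbx y)).aestronglyMeasurable
    · filter_upwards [ae_restrict_mem measurableSet_Ioo] with x hx
      have hb0 : 0 ≤ b x y := hbnn x y hx.1 hy
      have h1 := wgt_le_mul hr1 hx.1 hx.2.le
      rw [Real.norm_eq_abs, abs_of_nonneg (mul_nonneg (wgt_nonneg hr1 hx.1.le) hb0)]
      nlinarith [mul_nonneg hx.1.le hb0]
  set J : ℝ → ℝ := fun y => ∫ x in Ioo 0 y, wgt r x * b x y with hJdef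
  have hJnn : ∀ y : ℝ, 0 < y → 0 ≤ J y := by
    intro y hy
    apply setIntegral_nonneg measurableSet_Ioo
    intro x hx
    exact mul_nonneg (wgt_nonneg hr1 hx.1.le) (hbnn x y hx.1 hy)
  have hJle : ∀ y : ℝ, 0 < y → J y ≤ y ^ r + ((r - 1) / 2) * y := by
    intro y hy
    have : J y ≤ ∫ x in Ioo 0 y, (y ^ (r - 1) + (r - 1) / 2) * (x * b x y) := by
      apply setIntegral_mono_on (hJint y hy) ((hB0int y hy).const_mul _) measurableSet_Ioo
      intro x hx
      have hb0 : 0 ≤ b x y := hbnn x y hx.1 hy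
      have h1 := wgt_le_mul hr1 hx.1 hx.2.le
      nlinarith [mul_nonneg hx.1.le hb0]
    rw [integral_const_mul, hB0 y hy] at this
    calc J y ≤ (y ^ (r - 1) + (r - 1) / 2) * y := this
      _ = y ^ r + ((r - 1) / 2) * y := by rw [add_mul, rpow_sub_one_mul hy]
  -- J y ≤ wgt r y for 0 < y ≤ 1
  have hJsmall : ∀ y : ℝ, 0 < y → y ≤ 1 → J y ≤ wgt r y := by
    intro y hy hy1
    have : J y ≤ ∫ x in Ioo 0 y, ((r - 1) / 2 * y ^ 2) * (x * b x y) := by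
      apply setIntegral_mono_on (hJint y hy) ((hB0int y hy).const_mul _) measurableSet_Ioo
      intro x hx
      have hb0 : 0 ≤ b x y := hbnn x y hx.1 hy
      have hx1 : x ≤ 1 := le_trans hx.2.le hy1
      have hw : wgt r x = ((r - 1) / 2) * x ^ 3 := if_pos hx1
      have hx2 : x ^ 2 ≤ y ^ 2 := by nlinarith [hx.1.le, hx.2.le]
      have h3 : x ^ 3 ≤ y ^ 2 * x := by nlinarith [mul_le_mul_of_nonneg_left hx2 hx.1.le]
      rw [hw]
      nlinarith [mul_le_mul_of_nonneg_right h3 hb0, hr1]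
    rw [integral_const_mul, hB0 y hy] at this
    have hw : wgt r y = ((r - 1) / 2) * y ^ 3 := if_pos hy1
    rw [hw]
    have hy3 : (r - 1) / 2 * y ^ 2 * y = (r - 1) / 2 * y ^ 3 := by ring
    linarith
  -- J y - wgt r y ≤ -δ y^r + y for y > 1
  have hJbig : ∀ y : ℝ, 1 < y → J y - wgt r y ≤ -δ * y ^ r + y := by
    intro y hy
    have hy0 : (0:ℝ) < y := lt_trans one_pos hy
    have h1 : J y ≤ ∫ x in Ioo 0 y, (x ^ r * b x y + ((r - 1) / 2) * (x * b x y)) := by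
      apply setIntegral_mono_on (hJint y hy0)
        ((hIr y hy0).add ((hB0int y hy0).const_mul _)) measurableSet_Ioo
      intro x hx
      have hb0 : 0 ≤ b x y := hbnn x y hx.1 hy0
      have h2 := wgt_le hr1 hx.1
      simp only [Pi.add_apply]
      nlinarith [mul_le_mul_of_nonneg_right h2 hb0]
    rw [integral_add (hIr y hy0) ((hB0int y hy0).const_mul _), integral_const_mul, hB0 y hy0] at h1
    have h3 := hδr y hy
    have hw : wgt r y = y ^ r + ((r - 3) / 2) * y := if_neg (not_le.mpr hy)
    rw [hw]
    linarith
  -- measurability of J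
  have hJsm : StronglyMeasurable J := by
    have hK : StronglyMeasurable fun p : ℝ × ℝ =>
        ({q : ℝ × ℝ | 0 < q.2 ∧ q.2 < q.1}.indicator
          (fun q => wgt r q.2 * b q.2 q.1)) p := by
      apply Measurable.stronglyMeasurable
      apply Measurable.indicator
      · exact (hwm.comp measurable_snd).mul (hb.comp (measurable_snd.prodMk measurable_fst))
      · exact (measurableSet_lt measurable_const measurable_snd).inter
          (measurableSet_lt measurable_snd measurable_fst)
    have := hK.integral_prod_right' (ν := (volume : MeasureTheory.Measure ℝ))
    convert this using 1
    funext y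
    simp only [hJdef]
    rw [← integral_indicator measurableSet_Ioo]
    congr 1
  -- measurability of the inner integral of fragOp
  have hInnSM : StronglyMeasurable fun x => ∫ y in Ioi x, a y * b x y * ψ y := by
    have hK : StronglyMeasurable fun p : ℝ × ℝ =>
        ({q : ℝ × ℝ | q.1 < q.2}.indicator
          (fun q => a q.2 * b q.1 q.2 * ψ q.2)) p := by
      apply Measurable.stronglyMeasurable
      apply Measurable.indicator
      · exact ((ha.comp measurable_snd).mul hb).mul (hψm.comp measurable_snd)
      · exact measurableSet_lt measurable_fst measurable_snd
    have := hK.integral_prod_right' (ν := (volume : MeasureTheory.Measure ℝ))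
    convert this using 1
    funext x
    rw [← integral_indicator measurableSet_Ioi]
    congr 1
  -- the kernel on the product space
  set G : ℝ × ℝ → ℝ≥0∞ := fun p =>
    if 0 < p.1 ∧ p.1 < p.2 then ENNReal.ofReal (wgt r p.1 * (a p.2 * b p.1 p.2 * ψ p.2)) else 0
    with hGdef
  have hGm : Measurable G := by
    apply Measurable.ite
    · exact (measurableSet_lt measurable_const measurable_fst).inter
        (measurableSet_lt measurable_fst measurable_snd)
    · exact (((hwm.comp measurable_fst).mul
        (((ha.comp measurable_snd).mul hb).mul (hψm.comp measurable_snd)))).ennreal_ofReal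
    · exact measurable_const
  -- the x-side iterated lintegral
  set L : ℝ → ℝ≥0∞ := fun x => ∫⁻ y in Ioi x, ENNReal.ofReal (wgt r x * (a y * b x y * ψ y))
    with hLdef
  have hGx : ∀ x : ℝ, 0 < x → (∫⁻ y, G (x, y)) = L x := by
    intro x hx
    simp only [hLdef]
    rw [← lintegral_indicator measurableSet_Ioi]
    congr 1
    funext y
    by_cases hy : y ∈ Ioi x
    · rw [Set.indicator_of_mem hy, hGdef]
      simp only
      rw [if_pos ⟨hx, hy⟩]
    · rw [Set.indicator_of_notMem hy, hGdef]
      simp only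
      rw [if_neg (fun h => hy h.2)]
  have hT1 : (∫⁻ x, ∫⁻ y, G (x, y)) = ∫⁻ x in Ioi 0, L x := by
    rw [← lintegral_indicator measurableSet_Ioi]
    congr 1
    funext x
    by_cases hx : x ∈ Ioi 0
    · rw [Set.indicator_of_mem hx, hGx x hx]
    · rw [Set.indicator_of_notMem hx]
      have : ∀ y : ℝ, G (x, y) = 0 := by
        intro y
        simp only [hGdef]
        rw [if_neg (fun h => hx h.1)]
      simp [this]
  -- the y-side iterated lintegral equals ∫⁻ ofReal (a ψ J)
  have hinner : ∀ y : ℝ, 0 < y →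
      (∫⁻ x, G (x, y)) = ENNReal.ofReal (a y * ψ y * J y) := by
    intro y hy
    have haψ : 0 ≤ a y * ψ y := mul_nonneg (ha0 y hy) (hψ0 y hy)
    have step1 : (∫⁻ x, G (x, y))
        = ∫⁻ x in Ioo 0 y, ENNReal.ofReal ((a y * ψ y) * (wgt r x * b x y)) := by
      rw [← lintegral_indicator measurableSet_Ioo]
      congr 1
      funext x
      by_cases hx : x ∈ Ioo 0 y
      · rw [Set.indicator_of_mem hx, hGdef]
        simp only
        rw [if_pos ⟨hx.1, hx.2⟩]
        congr 1
        ring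
      · rw [Set.indicator_of_notMem hx, hGdef]
        simp only
        rw [if_neg (fun h => hx ⟨h.1, h.2⟩)]
    rw [step1]
    have step2 : ∀ x : ℝ, ENNReal.ofReal ((a y * ψ y) * (wgt r x * b x y))
        = ENNReal.ofReal (a y * ψ y) * ENNReal.ofReal (wgt r x * b x y) := fun x =>
      ENNReal.ofReal_mul haψ
    simp_rw [step2]
    rw [lintegral_const_mul (f := fun x => ENNReal.ofReal (wgt r x * b x y)) _ ((hwm.mul (hbx y)).ennreal_ofReal)]
    rw [← ofReal_integral_eq_lintegral_ofReal (hJint y hy) (by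
      filter_upwards [ae_restrict_mem measurableSet_Ioo] with x hx
      exact mul_nonneg (wgt_nonneg hr1 hx.1.le) (hbnn x y hx.1 hy))]
    rw [← ENNReal.ofReal_mul haψ]
  have hT2 : (∫⁻ y, ∫⁻ x, G (x, y)) = ∫⁻ y in Ioi 0, ENNReal.ofReal (a y * ψ y * J y) := by
    rw [← lintegral_indicator measurableSet_Ioi]
    congr 1
    funext y
    by_cases hy : y ∈ Ioi 0
    · rw [Set.indicator_of_mem hy, hinner y hy]
    · rw [Set.indicator_of_notMem hy]
      have : ∀ x : ℝ, G (x, y) = 0 := by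
        intro x
        simp only [hGdef]
        refine if_neg (fun h => hy ?_)
        exact lt_trans h.1 h.2
      simp [this]
  -- Tonelli
  have hswap : (∫⁻ x, ∫⁻ y, G (x, y)) = ∫⁻ y, ∫⁻ x, G (x, y) :=
    lintegral_lintegral_swap hGm.aemeasurable
  -- finiteness of the common value
  set C : ℝ := 1 + (r - 1) / 2 with hCdef
  have hCpos : (0:ℝ) < C := by rw [hCdef]; linarith
  have hΦbound : ∀ y : ℝ, 0 < y →
      a y * ψ y * J y ≤ C * ((y + y ^ m) * (1 + a y) * ψ y) := by
    intro y hy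
    have haψ : 0 ≤ a y * ψ y := mul_nonneg (ha0 y hy) (hψ0 y hy)
    have hyr : y ^ r ≤ y + y ^ m := by
      rcases le_or_gt y 1 with h | h
      · have : y ^ r ≤ y ^ (1:ℝ) := Real.rpow_le_rpow_of_exponent_ge hy h hr1.le
        rw [Real.rpow_one] at this
        have : y ^ r ≤ y := this
        have hm0 : 0 ≤ y ^ m := Real.rpow_nonneg hy.le m
        linarith
      · have : y ^ r ≤ y ^ m := Real.rpow_le_rpow_of_exponent_le h.le hrm
        linarith
    have hJ := hJle y hy
    have hJ0 := hJnn y hy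
    have hym : 0 ≤ y ^ m := Real.rpow_nonneg hy.le m
    have hstep : J y ≤ C * (y + y ^ m) := by
      rw [hCdef]
      nlinarith
    calc a y * ψ y * J y ≤ a y * ψ y * (C * (y + y ^ m)) :=
          mul_le_mul_of_nonneg_left hstep haψ
      _ ≤ C * ((y + y ^ m) * (1 + a y) * ψ y) := by
          have h1 : 0 ≤ ψ y := hψ0 y hy
          have h2 : 0 ≤ a y := ha0 y hy
          nlinarith
  have hT2ne : (∫⁻ y in Ioi 0, ENNReal.ofReal (a y * ψ y * J y)) ≠ ⊤ := by
    have hle : (∫⁻ y in Ioi 0, ENNReal.ofReal (a y * ψ y * J y))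
        ≤ ∫⁻ y in Ioi 0, ENNReal.ofReal (C * ((y + y ^ m) * (1 + a y) * ψ y)) := by
      apply setLIntegral_mono
      · exact (measurable_const.mul (((measurable_id.add (by fun_prop : Measurable fun x : ℝ => x ^ m)).mul
          (measurable_const.add ha)).mul hψm)).ennreal_ofReal
      · intro y hy
        exact ENNReal.ofReal_le_ofReal (hΦbound y hy)
    have heq : (∫⁻ y in Ioi 0, ENNReal.ofReal (C * ((y + y ^ m) * (1 + a y) * ψ y)))
        = ENNReal.ofReal (∫ y in Ioi 0, C * ((y + y ^ m) * (1 + a y) * ψ y)) := by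
      rw [ofReal_integral_eq_lintegral_ofReal (hψint.const_mul C) (by
        filter_upwards [ae_restrict_mem measurableSet_Ioi] with y hy
        have h1 : 0 ≤ ψ y := hψ0 y hy
        have h2 : 0 ≤ a y := ha0 y hy
        have hy0 : (0:ℝ) < y := hy
        have hym : 0 ≤ y ^ m := Real.rpow_nonneg hy0.le m
        have : 0 ≤ (y + y ^ m) * (1 + a y) * ψ y := by positivity
        positivity)]
    exact ne_top_of_le_ne_top (by rw [heq]; exact ENNReal.ofReal_ne_top) hle
  have hT1ne : (∫⁻ x in Ioi 0, L x) ≠ ⊤ := by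
    rw [← hT1, hswap, hT2]; exact hT2ne
  -- a.e. finiteness in x and identification of the Bochner integral
  set g : ℝ → ℝ := fun x => wgt r x * ∫ y in Ioi x, a y * b x y * ψ y with hgdef
  have hLm : Measurable fun x => ∫⁻ y, G (x, y) := hGm.lintegral_prod_right'
  have haefin : ∀ᵐ x : ℝ, (∫⁻ y, G (x, y)) < ⊤ := by
    apply ae_lt_top hLm
    rw [hswap, hT2]
    exact hT2ne
  have key : ∀ᵐ x ∂(volume.restrict (Ioi (0:ℝ))), ENNReal.ofReal (g x) = L x := by
    filter_upwards [ae_restrict_of_ae haefin, ae_restrict_mem measurableSet_Ioi]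
      with x hfin hx
    have hx0 : (0:ℝ) < x := hx
    have hLfin : L x < ⊤ := by rw [← hGx x hx0]; exact hfin
    have hw0 : 0 ≤ wgt r x := wgt_nonneg hr1 hx0.le
    have hwpos : 0 < wgt r x := wgt_pos hr1 hx0
    have hmeasg : Measurable fun y => a y * b x y * ψ y := (ha.mul (hby x)).mul hψm
    have hLM : L x = ENNReal.ofReal (wgt r x)
        * ∫⁻ y in Ioi x, ENNReal.ofReal (a y * b x y * ψ y) := by
      simp only [hLdef]
      rw [← lintegral_const_mul _ hmeasg.ennreal_ofReal]
      congr 1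
      funext y
      rw [← ENNReal.ofReal_mul hw0]
    have hMne : (∫⁻ y in Ioi x, ENNReal.ofReal (a y * b x y * ψ y)) ≠ ⊤ := by
      intro hM
      rw [hLM, hM, ENNReal.mul_top (by
        simp only [ne_eq, ENNReal.ofReal_eq_zero, not_le]
        exact hwpos)] at hLfin
      exact lt_irrefl _ hLfin
    have hnn : 0 ≤ᵐ[volume.restrict (Ioi x)] fun y => a y * b x y * ψ y := by
      filter_upwards [ae_restrict_mem measurableSet_Ioi] with y hy
      have hy0 : (0:ℝ) < y := lt_trans hx0 hy
      exact mul_nonneg (mul_nonneg (ha0 y hy0) (hbnn x y hx0 hy0)) (hψ0 y hy0)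
    have hval : (∫ y in Ioi x, a y * b x y * ψ y)
        = (∫⁻ y in Ioi x, ENNReal.ofReal (a y * b x y * ψ y)).toReal :=
      integral_eq_lintegral_of_nonneg_ae hnn hmeasg.aestronglyMeasurable
    simp only [hgdef]
    rw [hval, ENNReal.ofReal_mul hw0, ENNReal.ofReal_toReal hMne, hLM]
  have hgsm : AEStronglyMeasurable g (volume.restrict (Ioi (0:ℝ))) :=
    ((hwm.stronglyMeasurable.mul hInnSM).aestronglyMeasurable).restrict
  have hgnn : 0 ≤ᵐ[volume.restrict (Ioi (0:ℝ))] g := by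
    filter_upwards [ae_restrict_mem measurableSet_Ioi] with x hx
    have hx0 : (0:ℝ) < x := hx
    apply mul_nonneg (wgt_nonneg hr1 hx0.le)
    apply setIntegral_nonneg measurableSet_Ioi
    intro y hy
    have hy0 : (0:ℝ) < y := lt_trans hx0 hy
    exact mul_nonneg (mul_nonneg (ha0 y hy0) (hbnn x y hx0 hy0)) (hψ0 y hy0)
  have hglint : (∫⁻ x in Ioi 0, ENNReal.ofReal (g x)) = ∫⁻ x in Ioi 0, L x :=
    lintegral_congr_ae key
  have hgint : IntegrableOn g (Ioi 0) := by
    refine ⟨hgsm, ?_⟩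
    rw [hasFiniteIntegral_iff_ofReal hgnn, hglint]
    exact lt_top_iff_ne_top.mpr hT1ne
  have hgval : (∫ x in Ioi 0, g x) = (∫⁻ x in Ioi 0, L x).toReal := by
    rw [integral_eq_lintegral_of_nonneg_ae hgnn hgsm, hglint]
  -- y-side Bochner integral
  set Φ : ℝ → ℝ := fun y => a y * ψ y * J y with hΦdef
  have hΦm : Measurable Φ := (ha.mul hψm).mul hJsm.measurable
  have hΦnn : 0 ≤ᵐ[volume.restrict (Ioi (0:ℝ))] Φ := by
    filter_upwards [ae_restrict_mem measurableSet_Ioi] with y hy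
    exact mul_nonneg (mul_nonneg (ha0 y hy) (hψ0 y hy)) (hJnn y hy)
  have hΦint : IntegrableOn Φ (Ioi 0) := by
    refine ⟨hΦm.aestronglyMeasurable, ?_⟩
    rw [hasFiniteIntegral_iff_ofReal hΦnn]
    exact lt_top_iff_ne_top.mpr hT2ne
  have hΦval : (∫ y in Ioi 0, Φ y)
      = (∫⁻ y in Ioi 0, ENNReal.ofReal (a y * ψ y * J y)).toReal :=
    integral_eq_lintegral_of_nonneg_ae hΦnn hΦm.aestronglyMeasurable
  have hgΦ : (∫ x in Ioi 0, g x) = ∫ y in Ioi 0, Φ y := by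
    rw [hgval, hΦval, ← hT1, hswap, hT2]
  -- integrability of wgt * (a ψ)
  have hwaψint : IntegrableOn (fun x => wgt r x * (a x * ψ x)) (Ioi 0) := by
    apply Integrable.mono' (hψint.const_mul C)
    · exact ((hwm.mul (ha.mul hψm))).aestronglyMeasurable
    · filter_upwards [ae_restrict_mem measurableSet_Ioi] with x hx
      have hx0 : (0:ℝ) < x := hx
      have h1 : 0 ≤ ψ x := hψ0 x hx0
      have h2 : 0 ≤ a x := ha0 x hx0
      have hw0 : 0 ≤ wgt r x := wgt_nonneg hr1 hx0.le
      have hwle := wgt_le hr1 hx0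
      have hxm : 0 ≤ x ^ m := Real.rpow_nonneg hx0.le m
      have hxr : x ^ r ≤ x + x ^ m := by
        rcases le_or_gt x 1 with h | h
        · have h4 : x ^ r ≤ x ^ (1:ℝ) := Real.rpow_le_rpow_of_exponent_ge hx0 h hr1.le
          rw [Real.rpow_one] at h4
          linarith
        · have h4 : x ^ r ≤ x ^ m := Real.rpow_le_rpow_of_exponent_le h.le hrm
          linarith
      rw [Real.norm_eq_abs, abs_of_nonneg (mul_nonneg hw0 (mul_nonneg h2 h1))]
      have hwC : wgt r x ≤ C * (x + x ^ m) := by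
        rw [hCdef]; nlinarith
      calc wgt r x * (a x * ψ x) ≤ (C * (x + x ^ m)) * (a x * ψ x) := by
            apply mul_le_mul_of_nonneg_right hwC (mul_nonneg h2 h1)
        _ ≤ C * ((x + x ^ m) * (1 + a x) * ψ x) := by nlinarith
  -- decomposition of the main integral
  have hmain : (∫ x in Ioi (0:ℝ), wgt r x * fragOp a b ψ x)
      = ∫ y in Ioi (0:ℝ), a y * ψ y * (J y - wgt r y) := by
    have hfeq : ∀ x : ℝ, wgt r x * fragOp a b ψ x
        = -(wgt r x * (a x * ψ x)) + g x := by
      intro x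
      simp only [fragOp, hgdef]
      ring
    simp_rw [hfeq]
    have hneg : IntegrableOn (fun x => -(wgt r x * (a x * ψ x))) (Ioi 0) := hwaψint.neg
    rw [integral_add hneg hgint, integral_neg, hgΦ]
    rw [neg_add_eq_sub, ← integral_sub hΦint hwaψint]
    have : ∀ y : ℝ, Φ y - wgt r y * (a y * ψ y) = a y * ψ y * (J y - wgt r y) := by
      intro y; simp only [hΦdef]; ring
    simp_rw [this]
  rw [hmain]
  -- integrability of a ψ (J - w) on Ioi 0
  have hDint : IntegrableOn (fun y => a y * ψ y * (J y - wgt r y)) (Ioi 0) := by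
    have : (fun y => a y * ψ y * (J y - wgt r y))
        = fun y => Φ y - wgt r y * (a y * ψ y) := by
      funext y; simp only [hΦdef]; ring
    rw [this]
    exact hΦint.sub hwaψint
  -- integrability of x^r (aψ) and x (aψ) on Ioi 1
  have hsub : Ioi (1:ℝ) ⊆ Ioi 0 := fun x hx => show (0:ℝ) < x from lt_trans one_pos hx
  have haψr : IntegrableOn (fun x => x ^ r * (a x * ψ x)) (Ioi 1) := by
    apply Integrable.mono' (hψint.mono_set hsub)
    · exact ((by fun_prop : Measurable fun x : ℝ => x ^ r).mul (ha.mul hψm)).aestronglyMeasurable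
    · filter_upwards [ae_restrict_mem measurableSet_Ioi] with x hx
      have hx1 : (1:ℝ) < x := hx
      have hx0 : (0:ℝ) < x := lt_trans one_pos hx1
      have h1 : 0 ≤ ψ x := hψ0 x hx0
      have h2 : 0 ≤ a x := ha0 x hx0
      have hxr : x ^ r ≤ x ^ m := Real.rpow_le_rpow_of_exponent_le hx1.le hrm
      have hxr0 : 0 ≤ x ^ r := Real.rpow_nonneg hx0.le r
      have hxm : 0 ≤ x ^ m := Real.rpow_nonneg hx0.le m
      rw [Real.norm_eq_abs, abs_of_nonneg (mul_nonneg hxr0 (mul_nonneg h2 h1))]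
      nlinarith [mul_le_mul_of_nonneg_right hxr (mul_nonneg h2 h1),
        mul_nonneg hx0.le h1, mul_nonneg (mul_nonneg hx0.le h2) h1,
        mul_nonneg hxm h1]
  have haψ1 : IntegrableOn (fun x => x * (a x * ψ x)) (Ioi 1) := by
    apply Integrable.mono' (hψint.mono_set hsub)
    · exact (measurable_id.mul (ha.mul hψm)).aestronglyMeasurable
    · filter_upwards [ae_restrict_mem measurableSet_Ioi] with x hx
      have hx1 : (1:ℝ) < x := hx
      have hx0 : (0:ℝ) < x := lt_trans one_pos hx1
      have h1 : 0 ≤ ψ x := hψ0 x hx0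
      have h2 : 0 ≤ a x := ha0 x hx0
      have hxm : 0 ≤ x ^ m := Real.rpow_nonneg hx0.le m
      rw [Real.norm_eq_abs, abs_of_nonneg (mul_nonneg hx0.le (mul_nonneg h2 h1))]
      nlinarith [mul_nonneg hx0.le h1, mul_nonneg hxm h1,
        mul_nonneg hxm (mul_nonneg h2 h1)]
  -- split the integral
  have hsplit : (∫ y in Ioi (0:ℝ), a y * ψ y * (J y - wgt r y))
      = (∫ y in Ioc (0:ℝ) 1, a y * ψ y * (J y - wgt r y))
        + ∫ y in Ioi (1:ℝ), a y * ψ y * (J y - wgt r y) := by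
    rw [← setIntegral_union (Set.Ioc_disjoint_Ioi le_rfl) measurableSet_Ioi
      (hDint.mono_set Set.Ioc_subset_Ioi_self) (hDint.mono_set hsub),
      Set.Ioc_union_Ioi_eq_Ioi zero_le_one]
  rw [hsplit]
  have hpart1 : (∫ y in Ioc (0:ℝ) 1, a y * ψ y * (J y - wgt r y)) ≤ 0 := by
    apply setIntegral_nonpos measurableSet_Ioc
    intro y hy
    have haψ : 0 ≤ a y * ψ y := mul_nonneg (ha0 y hy.1) (hψ0 y hy.1)
    have := hJsmall y hy.1 hy.2
    exact mul_nonpos_of_nonneg_of_nonpos haψ (by linarith)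
  have hpart2 : (∫ y in Ioi (1:ℝ), a y * ψ y * (J y - wgt r y))
      ≤ -δ * (∫ x in Ioi (1:ℝ), x ^ r * (a x * ψ x)) + ∫ x in Ioi (1:ℝ), x * (a x * ψ x) := by
    have hle : (∫ y in Ioi (1:ℝ), a y * ψ y * (J y - wgt r y))
        ≤ ∫ y in Ioi (1:ℝ), (-δ * (y ^ r * (a y * ψ y)) + y * (a y * ψ y)) := by
      apply setIntegral_mono_on (hDint.mono_set hsub)
        ((haψr.const_mul (-δ)).add haψ1) measurableSet_Ioi
      intro y hy
      have hy1 : (1:ℝ) < y := hy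
      have hy0 : (0:ℝ) < y := lt_trans one_pos hy1
      have haψ : 0 ≤ a y * ψ y := mul_nonneg (ha0 y hy0) (hψ0 y hy0)
      have h1 := hJbig y hy1
      calc a y * ψ y * (J y - wgt r y) ≤ a y * ψ y * (-δ * y ^ r + y) :=
            mul_le_mul_of_nonneg_left h1 haψ
        _ = -δ * (y ^ r * (a y * ψ y)) + y * (a y * ψ y) := by ring
    rw [integral_add ((haψr.const_mul (-δ))) haψ1, integral_const_mul] at hle
    exact hle
  linarith
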